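/- The kernel of phi : G_V -> S_5 is the normal closure in G_V of the two elements (g3 g1 g2 g1)^2 and (g3' g1 g2 g1)^2. -/

import Mathlib

/-!
Modulo `N`, the normal closure of `(g3 g1 g2 g1)²`, the images `t₀ = g2 g1 g2`, `t₁ = g2`,
`t₂ = g3`, `t₃ = g4` satisfy the Coxeter relations of type `A₄`: the relations `<g4, g3'>`,
`<g4, g3' g3 g3'⁻¹>` and `[g3' g3, g4] = e` already force `g3 = g3'` in `G_V`, and
`(g3 g1 g2 g1)² = e` says that `g3` commutes with `g1 g2 g1 = g2 g1 g2`. They generate, since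
`g1 = g2 t₀ g2`. A group generated by elements satisfying the type `A_n` relations has at most
`(n + 1)!` elements, because every element is a product `u_n ⋯ u_1` where `u_k` is one of the
`k + 1` products `t_j t_{j+1} ⋯ t_{k-1}`. So `G_V ⧸ N` has at most `5! = |S₅|` elements, and the
map `G_V ⧸ N → S₅` induced by `φ`, which is onto because its image contains the adjacent
transpositions, is injective.
-/

open Pointwise

structure SatisfiesCoxeterA {G : Type*} [Group G] (n : ℕ) (t : ℕ → G) : Prop where
  mul_self : ∀ i < n, t i * t i = 1
  braid : ∀ i, i + 1 < n → t i * t (i + 1) * t i = t (i + 1) * t i * t (i + 1)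
  commute : ∀ i j, i + 2 ≤ j → j < n → Commute (t i) (t j)

namespace CoxeterA

open scoped Nat

variable {G : Type*} [Group G]

def ascProd (t : ℕ → G) (j : ℕ) : ℕ → G
  | 0 => 1
  | ℓ + 1 => t j * ascProd t (j + 1) ℓ

theorem commute_ascProd {t : ℕ → G} {x : G} {j ℓ : ℕ}
    (hx : ∀ m, j ≤ m → m < j + ℓ → Commute x (t m)) : Commute x (ascProd t j ℓ) := by
  induction ℓ generalizing j with
  | zero => exact Commute.one_right x
  | succ ℓ ih =>
    exact (hx j le_rfl (by omega)).mul_right (ih fun m hjm hm => hx m (by omega) (by omega))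

theorem ascProd_eq_mul_ascProd {t : ℕ → G} {j k : ℕ} (hj : j ≤ k) :
    ascProd t j (k + 1 - j) = t j * ascProd t (j + 1) (k + 1 - (j + 1)) := by
  rw [show k + 1 - j = k - j + 1 by omega, Nat.add_sub_add_right]
  rfl

variable [DecidableEq G]

def transversal (t : ℕ → G) (k : ℕ) : Finset G :=
  (Finset.range (k + 2)).image fun j => ascProd t j (k + 1 - j)

def normalForms (t : ℕ → G) : ℕ → Finset G
  | 0 => {1}
  | k + 1 => transversal t k * normalForms t k

theorem card_normalForms_le (t : ℕ → G) (k : ℕ) : (normalForms t k).card ≤ (k + 1)! := by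
  induction k with
  | zero => simp [normalForms]
  | succ k ih =>
    calc (normalForms t (k + 1)).card
        ≤ (transversal t k).card * (normalForms t k).card := Finset.card_mul_le
      _ ≤ (k + 2) * (k + 1)! := by
          gcongr
          exact Finset.card_image_le.trans (Finset.card_range _).le
      _ = (k + 2)! := (Nat.factorial_succ (k + 1)).symm

theorem one_mem_normalForms (t : ℕ → G) (k : ℕ) : 1 ∈ normalForms t k := by
  induction k with
  | zero => exact Finset.mem_singleton_self 1
  | succ k ih =>
    refine Finset.mem_mul.mpr ⟨1, Finset.mem_image.mpr ⟨k + 1, by simp, ?_⟩, 1, ih, one_mul 1⟩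
    simp [ascProd]

end CoxeterA

namespace SatisfiesCoxeterA

open CoxeterA
open scoped Nat

variable {G : Type*} [Group G] {n : ℕ} {t : ℕ → G}

theorem mul_ascProd_of_lt (h : SatisfiesCoxeterA n t) {i j ℓ : ℕ}
    (hji : j < i) (hi : i < j + ℓ) (hn : j + ℓ ≤ n) :
    t i * ascProd t j ℓ = ascProd t j ℓ * t (i - 1) := by
  induction ℓ generalizing j with
  | zero => omega
  | succ ℓ ih =>
    obtain hji' | rfl := (Nat.succ_le_of_lt hji).lt_or_eq
    · rw [ascProd, ← mul_assoc, ← (h.commute j i hji' (by omega)).eq, mul_assoc,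
        ih hji' (by omega) (by omega), mul_assoc]
    · obtain ⟨ℓ, rfl⟩ : ∃ ℓ', ℓ = ℓ' + 1 := Nat.exists_eq_add_one.mpr (by omega)
      have hc : Commute (t j) (ascProd t (j + 1 + 1) ℓ) :=
        commute_ascProd fun m hm _ => h.commute j m hm (by omega)
      simp only [ascProd]
      calc t (j + 1) * (t j * (t (j + 1) * ascProd t (j + 1 + 1) ℓ))
          = t j * t (j + 1) * t j * ascProd t (j + 1 + 1) ℓ := by
            rw [h.braid j (by omega)]; group
        _ = t j * (t (j + 1) * ascProd t (j + 1 + 1) ℓ) * t j := by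
            rw [mul_assoc _ (t j), hc.eq]; group

section NormalForms

variable [DecidableEq G]

theorem mul_ascProd_mem_transversal_or (h : SatisfiesCoxeterA n t) {i j k : ℕ}
    (hk : k < n) (hi : i ≤ k) (hj : j ≤ k + 1) :
    t i * ascProd t j (k + 1 - j) ∈ transversal t k ∨
      ∃ i' < k, t i * ascProd t j (k + 1 - j) = ascProd t j (k + 1 - j) * t i' := by
  rcases lt_trichotomy (i + 1) j with hij | rfl | hji
  · refine Or.inr ⟨i, by omega, (commute_ascProd fun m hm _ => ?_).eq⟩
    exact h.commute i m (by omega) (by omega)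
  · exact Or.inl (Finset.mem_image.mpr ⟨i, by simp; omega, ascProd_eq_mul_ascProd hi⟩)
  · rcases (Nat.lt_succ_iff.mp hji).eq_or_lt with rfl | hji
    · refine Or.inl (Finset.mem_image.mpr ⟨j + 1, by simp; omega, ?_⟩)
      rw [ascProd_eq_mul_ascProd hi, ← mul_assoc, h.mul_self j (by omega), one_mul]
    · exact Or.inr ⟨i - 1, by omega, h.mul_ascProd_of_lt hji (by omega) (by omega)⟩

theorem mul_mem_normalForms (h : SatisfiesCoxeterA n t) {i k : ℕ} (hk : k ≤ n) (hi : i < k)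
    {x : G} (hx : x ∈ normalForms t k) : t i * x ∈ normalForms t k := by
  induction k generalizing i x with
  | zero => omega
  | succ k ih =>
    obtain ⟨u, hu, y, hy, rfl⟩ := Finset.mem_mul.mp hx
    obtain ⟨j, hj, rfl⟩ := Finset.mem_image.mp hu
    rw [← mul_assoc]
    rcases h.mul_ascProd_mem_transversal_or (by omega) (Nat.lt_succ_iff.mp hi)
      (Nat.lt_succ_iff.mp (Finset.mem_range.mp hj)) with hu' | ⟨i', hi', he⟩
    · exact Finset.mul_mem_mul hu' hy
    · rw [he, mul_assoc]
      exact Finset.mul_mem_mul hu (ih (by omega) hi' hy)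

theorem closure_subset_normalForms (h : SatisfiesCoxeterA n t) :
    (Subgroup.closure (t '' Set.Iio n) : Set G) ⊆ normalForms t n := by
  intro x hx
  induction hx using Subgroup.closure_induction_left with
  | one => exact one_mem_normalForms t n
  | mul_left _ hs _ _ ih =>
    obtain ⟨i, hi, rfl⟩ := hs
    exact h.mul_mem_normalForms le_rfl hi ih
  | inv_mul_cancel _ hs _ _ ih =>
    obtain ⟨i, hi, rfl⟩ := hs
    rw [inv_eq_of_mul_eq_one_right (h.mul_self i hi)]
    exact h.mul_mem_normalForms le_rfl hi ih

end NormalForms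

theorem finite_of_closure_eq_top (h : SatisfiesCoxeterA n t)
    (hgen : Subgroup.closure (t '' Set.Iio n) = ⊤) : Finite G := by
  classical
  have hsub := h.closure_subset_normalForms
  rw [hgen, Subgroup.coe_top] at hsub
  exact Set.finite_univ_iff.mp ((normalForms t n).finite_toSet.subset hsub)

theorem natCard_le_of_closure_eq_top (h : SatisfiesCoxeterA n t)
    (hgen : Subgroup.closure (t '' Set.Iio n) = ⊤) : Nat.card G ≤ (n + 1)! := by
  classical
  have hsub := h.closure_subset_normalForms
  rw [hgen, Subgroup.coe_top] at hsub
  calc Nat.card G = (Set.univ : Set G).ncard := (Set.ncard_univ G).symm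
    _ ≤ (normalForms t n : Set G).ncard := Set.ncard_le_ncard hsub (Finset.finite_toSet _)
    _ = (normalForms t n).card := Set.ncard_coe_finset _
    _ ≤ (n + 1)! := card_normalForms_le t n

end SatisfiesCoxeterA

section Relations

variable {G : Type*} [Group G]

theorem commute_of_mul_self_eq_one {x y : G} (hx : x * x = 1) (hy : y * y = 1)
    (hxy : x * y * (x * y) = 1) : Commute x y :=
  calc x * y = (x * y)⁻¹ := eq_inv_of_mul_eq_one_left hxy
    _ = y * x := by
      rw [mul_inv_rev, inv_eq_of_mul_eq_one_right hx, inv_eq_of_mul_eq_one_right hy]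

theorem eq_of_braid_of_braid_conj {c d f : G} (hd : d * d = 1) (hfd : f * d * f = d * f * d)
    (hf_conj : f * (d * c * d⁻¹) * f = d * c * d⁻¹ * f * (d * c * d⁻¹))
    (hcf : Commute (d * c) f) : c = d := by
  have hdinv : d⁻¹ = d := inv_eq_of_mul_eq_one_right hd
  rw [hdinv] at hf_conj
  have key : d * c * d * f * (d * c * d) = d * c * d * f * d :=
    calc d * c * d * f * (d * c * d) = f * (d * c) * (d * f) := by rw [← hf_conj]; group
      _ = d * c * (f * d * f) := by rw [← hcf.eq]; group
      _ = d * c * d * f * d := by rw [hfd]; group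
  have hdcd : d * c * d = d := mul_left_cancel key
  calc c = d⁻¹ * (d * c * d) * d⁻¹ := by group
    _ = d := by rw [hdcd, hdinv, hd, one_mul]

theorem satisfiesCoxeterA_four {a b c f : G} (ha : a * a = 1) (hb : b * b = 1) (hc : c * c = 1)
    (hf : f * f = 1) (hab : a * b * a = b * a * b) (hbc : b * c * b = c * b * c)
    (hcf : c * f * c = f * c * f) (hc_aba : Commute c (a * b * a)) (haf : Commute a f)
    (hbf : Commute b f) : SatisfiesCoxeterA 4 ([b * a * b, b, c, f].getD · 1) := by
  have ha' (x : G) : a * (a * x) = x := by rw [← mul_assoc, ha, one_mul]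
  have hb' (x : G) : b * (b * x) = x := by rw [← mul_assoc, hb, one_mul]
  refine ⟨fun i hi => ?_, fun i hi => ?_, fun i j hij hj => ?_⟩
  · interval_cases i <;> simp only [List.getD_cons_zero, List.getD_cons_succ]
    exacts [by simp only [mul_assoc, ha', hb', hb], hb, hc, hf]
  · obtain hi : i < 3 := by omega
    interval_cases i <;> simp only [List.getD_cons_zero, List.getD_cons_succ]
    · calc b * a * b * b * (b * a * b) = b * (a * b * a) * b := by simp only [mul_assoc, hb']
        _ = b * (b * a * b) * b := by rw [hab]
    exacts [hbc, hcf]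
  · obtain hi : i < 2 := by omega
    interval_cases i <;> interval_cases j <;> simp only [List.getD_cons_zero, List.getD_cons_succ]
    exacts [hab ▸ hc_aba.symm, (hbf.mul_left haf).mul_left hbf, hbf]

end Relations

open Equiv in
theorem eq_top_of_swap_mem {H : Subgroup (Perm (Fin 5))} (h02 : swap 0 2 ∈ H)
    (h12 : swap 1 2 ∈ H) (h23 : swap 2 3 ∈ H) (h34 : swap 3 4 ∈ H) : H = ⊤ := by
  have h01 : swap 0 1 ∈ H := by
    rw [show swap (0 : Fin 5) 1 = swap 1 2 * swap 0 2 * swap 1 2 by decide]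
    exact H.mul_mem (H.mul_mem h12 h02) h12
  rw [eq_top_iff, ← Subgroup.closure_eq_top_of_mclosure_eq_top
    (Perm.mclosure_swap_castSucc_succ 4), Subgroup.closure_le]
  rintro _ ⟨i, rfl⟩
  fin_cases i
  exacts [h01, h12, h23, h34]

namespace Stmt2

/-- Generators: `0 ↦ g1`, `1 ↦ g2`, `2 ↦ g3`, `3 ↦ g3'`, `4 ↦ g4`. -/
def g (i : Fin 5) : FreeGroup (Fin 5) := FreeGroup.of i

/-- The braid relator `x y x (y x y)⁻¹`, i.e. `<x,y> = e`. -/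
def braid (x y : FreeGroup (Fin 5)) : FreeGroup (Fin 5) := x * y * x * (y * x * y)⁻¹

/-- The commutator relator `x y x⁻¹ y⁻¹`, i.e. `[x,y] = e`. -/
def comm (x y : FreeGroup (Fin 5)) : FreeGroup (Fin 5) := x * y * x⁻¹ * y⁻¹

/-- Relators of the group `G_V` from Theorem 3.3 (union of the Veronese surface `V₂`
and a plane).  Here `g 0 = g1`, `g 1 = g2`, `g 2 = g3`, `g 3 = g3'`, `g 4 = g4`. -/
def rels : Set (FreeGroup (Fin 5)) :=
  { (g 0) ^ 2, (g 1) ^ 2, (g 2) ^ 2, (g 3) ^ 2, (g 4) ^ 2,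
    braid (g 0) (g 1),
    braid (g 1) ((g 2)⁻¹ * (g 3)⁻¹ * g 0 * g 3 * g 2),
    braid (g 1) (g 3 * g 2 * g 0 * (g 2)⁻¹ * (g 3)⁻¹),
    braid (g 1) (g 3),
    braid (g 1) (g 3 * g 2 * (g 3)⁻¹),
    braid (g 1) (g 3 * g 2 * g 3 * (g 2)⁻¹ * (g 3)⁻¹),
    braid (g 0) (g 3),
    braid (g 0) (g 3 * g 2 * (g 3)⁻¹),
    braid (g 0) (g 3 * g 2 * g 3 * (g 2)⁻¹ * (g 3)⁻¹),
    braid (g 4) (g 3),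
    braid (g 4) (g 3 * g 2 * (g 3)⁻¹),
    braid (g 4) (g 3 * g 2 * g 3 * (g 2)⁻¹ * (g 3)⁻¹),
    comm (g 0) (g 4), comm (g 1) (g 4), comm (g 3 * g 2) (g 4),
    (g 1 * (g 2)⁻¹ * (g 3)⁻¹ * g 0 * g 3 * g 2 * g 0 * g 1 * (g 0)⁻¹ * (g 2)⁻¹ * (g 3)⁻¹
        * (g 0)⁻¹ * g 3 * g 2 * (g 1)⁻¹)
      * ((g 2)⁻¹ * (g 3)⁻¹ * g 1 * g 3 * g 2)⁻¹,
    (g 4) ^ 2 * g 1 * g 3 * g 2 * g 1 * (g 2)⁻¹ * (g 3)⁻¹ * g 0 * g 3 * g 2 * g 0 }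

/-- The presented group `G_V`. -/
abbrev GV := PresentedGroup rels

open PresentedGroup

theorem mk_g (i : Fin 5) : mk rels (g i) = of i := rfl

theorem of_mul_self (i : Fin 5) : (of i : GV) * of i = 1 := by
  have hmem : g i ^ 2 ∈ rels := by fin_cases i <;> simp [rels]
  simpa [pow_two, mk_g] using one_of_mem hmem

theorem mk_braid {x y : FreeGroup (Fin 5)} (h : braid x y ∈ rels) :
    mk rels x * mk rels y * mk rels x = mk rels y * mk rels x * mk rels y := by
  simpa using mk_eq_mk_of_mul_inv_mem h

theorem commute_mk {x y : FreeGroup (Fin 5)} (h : comm x y ∈ rels) :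
    Commute (mk rels x) (mk rels y) :=
  commutatorElement_eq_one_iff_commute.mp <| by
    simpa [comm, commutatorElement_def] using one_of_mem h

theorem of_two_eq_of_three : (of 2 : GV) = of 3 := by
  have hfd := mk_braid (x := g 4) (y := g 3) (by simp [rels])
  have hf_conj := mk_braid (x := g 4) (y := g 3 * g 2 * (g 3)⁻¹) (by simp [rels])
  have hcf := commute_mk (x := g 3 * g 2) (y := g 4) (by simp [rels])
  simp only [map_mul, map_inv, mk_g] at hfd hf_conj hcf
  exact eq_of_braid_of_braid_conj (of_mul_self 3) hfd hf_conj hcf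

variable {Q : Type*} [Group Q]

def coxeterGens (π : GV →* Q) : ℕ → Q :=
  ([π (of 1) * π (of 0) * π (of 1), π (of 1), π (of 2), π (of 4)].getD · 1)

theorem satisfiesCoxeterA_coxeterGens (π : GV →* Q)
    (hr : π ((of 2 * of 0 * of 1 * of 0 : GV) ^ 2) = 1) :
    SatisfiesCoxeterA 4 (coxeterGens π) := by
  have hsq (i : Fin 5) : π (of i) * π (of i) = 1 := by rw [← map_mul, of_mul_self, map_one]
  have hab := congrArg π (mk_braid (x := g 0) (y := g 1) (by simp [rels]))
  have hbc := congrArg π (mk_braid (x := g 1) (y := g 3) (by simp [rels]))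
  have hfc := congrArg π (mk_braid (x := g 4) (y := g 3) (by simp [rels]))
  have haf := (commute_mk (x := g 0) (y := g 4) (by simp [rels])).map π
  have hbf := (commute_mk (x := g 1) (y := g 4) (by simp [rels])).map π
  simp only [map_mul, mk_g, ← of_two_eq_of_three] at hab hbc hfc haf hbf
  set a := π (of 0)
  set b := π (of 1)
  have haba : a * b * a * (a * b * a) = 1 :=
    calc a * b * a * (a * b * a) = a * (b * (a * a) * b) * a := by group
      _ = 1 := by rw [hsq 0, mul_one, hsq 1, mul_one, hsq 0]
  have hc_aba := commute_of_mul_self_eq_one (hsq 2) haba (by simpa [pow_two, mul_assoc] using hr)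
  exact satisfiesCoxeterA_four (hsq 0) (hsq 1) (hsq 2) (hsq 4) hab hbc hfc.symm hc_aba haf hbf

theorem closure_coxeterGens_eq_top (π : GV →* Q) (hπ : Function.Surjective π) :
    Subgroup.closure (coxeterGens π '' Set.Iio 4) = ⊤ := by
  set H := Subgroup.closure (coxeterGens π '' Set.Iio 4)
  have mem (k : ℕ) (hk : k < 4) : coxeterGens π k ∈ H := Subgroup.subset_closure ⟨k, hk, rfl⟩
  rw [eq_top_iff, ← MonoidHom.range_eq_top.mpr hπ, MonoidHom.range_eq_map, ← closure_range_of,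
    MonoidHom.map_closure, Subgroup.closure_le]
  rintro _ ⟨_, ⟨i, rfl⟩, rfl⟩
  fin_cases i
  · have hb : π (of 1) * π (of 1) = 1 := by rw [← map_mul, of_mul_self, map_one]
    have hb' (x : Q) : π (of 1) * (π (of 1) * x) = x := by rw [← mul_assoc, hb, one_mul]
    show π (of 0) ∈ H
    rw [show π (of 0) = π (of 1) * (π (of 1) * π (of 0) * π (of 1)) * π (of 1) by
      simp only [mul_assoc, hb', hb, mul_one]]
    exact mul_mem (mul_mem (mem 1 (by norm_num)) (mem 0 (by norm_num))) (mem 1 (by norm_num))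
  · exact mem 1 (by norm_num)
  · exact mem 2 (by norm_num)
  · show π (of 3) ∈ H
    rw [← of_two_eq_of_three]
    exact mem 2 (by norm_num)
  · exact mem 3 (by norm_num)

/-- Theorem 3.3 (kernel description): for the homomorphism `φ : G_V → S₅` determined by
`g1 ↦ (1 3)`, `g2 ↦ (2 3)`, `g3 ↦ (3 4)`, `g3' ↦ (3 4)`, `g4 ↦ (4 5)`, the kernel of `φ`
is the normal closure of `(g3 g1 g2 g1)²` and `(g3' g1 g2 g1)²`. -/
theorem ker_eq_normalClosure (φ : GV →* Equiv.Perm (Fin 5))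
    (h1 : φ (PresentedGroup.of 0) = Equiv.swap 0 2)
    (h2 : φ (PresentedGroup.of 1) = Equiv.swap 1 2)
    (h3 : φ (PresentedGroup.of 2) = Equiv.swap 2 3)
    (h3' : φ (PresentedGroup.of 3) = Equiv.swap 2 3)
    (h4 : φ (PresentedGroup.of 4) = Equiv.swap 3 4) :
    MonoidHom.ker φ = Subgroup.normalClosure
      { (PresentedGroup.of 2 * PresentedGroup.of 0 * PresentedGroup.of 1
          * PresentedGroup.of 0 : GV) ^ 2,
        (PresentedGroup.of 3 * PresentedGroup.of 0 * PresentedGroup.of 1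
          * PresentedGroup.of 0 : GV) ^ 2 } := by
  set N := Subgroup.normalClosure
    { (PresentedGroup.of 2 * PresentedGroup.of 0 * PresentedGroup.of 1
        * PresentedGroup.of 0 : GV) ^ 2,
      (PresentedGroup.of 3 * PresentedGroup.of 0 * PresentedGroup.of 1
        * PresentedGroup.of 0 : GV) ^ 2 }
  have hle : N ≤ φ.ker := Subgroup.normalClosure_le_normal <| by
    rintro _ (rfl | rfl) <;>
      simp only [SetLike.mem_coe, MonoidHom.mem_ker, map_pow, map_mul, h1, h2, h3, h3'] <;>
      decide
  have hφ : Function.Surjective φ :=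
    MonoidHom.range_eq_top.mp (eq_top_of_swap_mem ⟨_, h1⟩ ⟨_, h2⟩ ⟨_, h3⟩ ⟨_, h4⟩)
  have hr : QuotientGroup.mk' N ((of 2 * of 0 * of 1 * of 0 : GV) ^ 2) = 1 :=
    (QuotientGroup.eq_one_iff _).mpr (Subgroup.subset_normalClosure (Set.mem_insert _ _))
  have hcox := satisfiesCoxeterA_coxeterGens _ hr
  have hgen := closure_coxeterGens_eq_top _ (QuotientGroup.mk'_surjective N)
  have : Finite (GV ⧸ N) := hcox.finite_of_closure_eq_top hgen
  have hbij := (QuotientGroup.lift_surjective_of_surjective N φ hφ hle).bijective_of_nat_card_le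
    (by rw [Nat.card_perm, Nat.card_fin]; exact hcox.natCard_le_of_closure_eq_top hgen)
  exact ((QuotientGroup.injective_lift_iff N φ hle).mp hbij.injective).symm

end Stmt2
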